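/- LQR Gaussian-quadratic class bracketing: fix h ≤ H and σ > 0. Let 𝒳 ⊆ ℝ^{d_x} with ‖x‖₂ ≤ m_x for all x ∈ 𝒳 and 𝒜 ⊆ ℝ^{d_a} with ‖a‖₂ ≤ m_a for all a ∈ 𝒜, and let ℳ₁ ⊆ ℝ^{d_x×d_x}, ℳ₂ ⊆ ℝ^{d_a×d_x}, ℳ₃ ⊆ ℝ^{d_a×d_a} be sets of matrices. Define ℱ_h = { f(·|x,a) = 𝒩(· | x^⊤M₁x + a^⊤M₂x + a^⊤M₃a, (H−h+1)σ²) : M₁ ∈ ℳ₁, M₂ ∈ ℳ₂, M₃ ∈ ℳ₃ }. Then N_[]( ε, ℱ_h, ‖·‖_∞ ) ≤ ∏_{i=1,2,3} N( ε σ² (H−h+1) √(2πe) / ( 2(m_x² + m_x m_a + m_a²) ), ℳ_i, ‖·‖_F ), where N(·,·,‖·‖_F) denotes the covering number with respect to the Frobenius norm. -/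

import Mathlib

open MeasureTheory ENNReal Matrix

/-- Bracketing number (w.r.t. the sup norm) of a class `F` of conditional densities
`α → β → ℝ`: the minimal number of `ε`-brackets `[l, u]` (i.e. `sup |u − l| ≤ ε`)
needed to cover `F`. -/
noncomputable def bracketingNumber {α β : Type*} (F : Set (α → β → ℝ)) (ε : ℝ) : ℝ≥0∞ :=
  ⨅ (k : ℕ) (_ : ∃ B : Fin k → (α → β → ℝ) × (α → β → ℝ),
      (∀ j, ∀ x y, |(B j).2 x y - (B j).1 x y| ≤ ε) ∧
      ∀ f ∈ F, ∃ j, ∀ x y, (B j).1 x y ≤ f x y ∧ f x y ≤ (B j).2 x y), (k : ℝ≥0∞)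

/-- The Frobenius norm of a real matrix. -/
noncomputable def frobeniusNorm {m n : ℕ} (M : Matrix (Fin m) (Fin n) ℝ) : ℝ :=
  Real.sqrt (∑ i, ∑ j, (M i j) ^ 2)

/-- Covering number of a set of matrices w.r.t. the Frobenius norm: the minimal number of
Frobenius balls of radius `ε` needed to cover `S`. -/
noncomputable def coveringNumber {m n : ℕ} (S : Set (Matrix (Fin m) (Fin n) ℝ)) (ε : ℝ) :
    ℝ≥0∞ :=
  ⨅ (k : ℕ) (_ : ∃ c : Fin k → Matrix (Fin m) (Fin n) ℝ,
      ∀ M ∈ S, ∃ j, frobeniusNorm (M - c j) ≤ ε), (k : ℝ≥0∞)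

/-- The one-dimensional Gaussian density with mean `μ` and standard deviation `σ`. -/
noncomputable def gaussianDensity (μ σ z : ℝ) : ℝ :=
  (1 / (σ * Real.sqrt (2 * Real.pi))) * Real.exp (-(z - μ) ^ 2 / (2 * σ ^ 2))

/-- The Euclidean norm of a vector in `ℝ^n`. -/
noncomputable def e2norm {n : ℕ} (v : Fin n → ℝ) : ℝ :=
  Real.sqrt (∑ i, (v i) ^ 2)

/-! ### Auxiliary lemmas -/

lemma e2norm_nonneg {n : ℕ} (v : Fin n → ℝ) : 0 ≤ e2norm v := Real.sqrt_nonneg _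
lemma frob_nonneg {m n : ℕ} (M : Matrix (Fin m) (Fin n) ℝ) : 0 ≤ frobeniusNorm M :=
  Real.sqrt_nonneg _

lemma cs_sum {n : ℕ} (f g : Fin n → ℝ) :
    |∑ i, f i * g i| ≤ Real.sqrt (∑ i, f i ^ 2) * Real.sqrt (∑ i, g i ^ 2) := by
  have h := Finset.sum_mul_sq_le_sq_mul_sq Finset.univ f g
  have h2 : |∑ i, f i * g i| = Real.sqrt ((∑ i, f i * g i) ^ 2) := by
    rw [Real.sqrt_sq_eq_abs]
  rw [h2, ← Real.sqrt_mul (by positivity)]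
  exact Real.sqrt_le_sqrt h

lemma dot_mulVec_abs_le {m n : ℕ} (y : Fin m → ℝ) (A : Matrix (Fin m) (Fin n) ℝ)
    (x : Fin n → ℝ) : |y ⬝ᵥ A.mulVec x| ≤ e2norm y * (frobeniusNorm A * e2norm x) := by
  have h1 : |y ⬝ᵥ A.mulVec x| ≤ e2norm y * Real.sqrt (∑ i, (A.mulVec x i) ^ 2) :=
    cs_sum y (A.mulVec x)
  refine h1.trans (mul_le_mul_of_nonneg_left ?_ (e2norm_nonneg y))
  rw [frobeniusNorm, e2norm, ← Real.sqrt_mul (by positivity)]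
  apply Real.sqrt_le_sqrt
  rw [Finset.sum_mul]
  apply Finset.sum_le_sum
  intro i _
  have := Finset.sum_mul_sq_le_sq_mul_sq Finset.univ (fun j => A i j) x
  calc (A.mulVec x i) ^ 2 = (∑ j, A i j * x j) ^ 2 := by rfl
    _ ≤ (∑ j, A i j ^ 2) * ∑ j, x j ^ 2 := this

lemma abs_mul_exp_le (s t : ℝ) (hs : 0 < s) :
    |t| * Real.exp (-t ^ 2 / (2 * s ^ 2)) ≤ s * Real.exp (-(1/2)) := by
  have key : |t| / s ≤ Real.exp (t ^ 2 / (2 * s ^ 2) - 1/2) := by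
    have h1 : t ^ 2 / (2 * s ^ 2) - 1/2 + 1 ≤ Real.exp (t ^ 2 / (2 * s ^ 2) - 1/2) :=
      Real.add_one_le_exp _
    have h2 : |t| / s ≤ t ^ 2 / (2 * s ^ 2) + 1/2 := by
      have h3 : 0 ≤ (|t| / s - 1) ^ 2 := sq_nonneg _
      have h4 : (|t|/s)^2 = t^2 / s^2 := by
        rw [div_pow, sq_abs]
      have h5 : t ^ 2 / (2 * s ^ 2) = (t^2/s^2) / 2 := by ring
      nlinarith [h3, h4, h5]
    linarith
  have hE : Real.exp (-t ^ 2 / (2 * s ^ 2)) * Real.exp (t ^ 2 / (2 * s ^ 2) - 1/2)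
      = Real.exp (-(1/2)) := by
    rw [← Real.exp_add]; ring_nf
  calc |t| * Real.exp (-t ^ 2 / (2 * s ^ 2))
      = (|t| / s) * Real.exp (-t ^ 2 / (2 * s ^ 2)) * s := by field_simp
    _ ≤ Real.exp (t ^ 2 / (2 * s ^ 2) - 1/2) * Real.exp (-t ^ 2 / (2 * s ^ 2)) * s := by
        apply mul_le_mul_of_nonneg_right _ hs.le
        exact mul_le_mul_of_nonneg_right key (Real.exp_pos _).le
    _ = s * Real.exp (-(1/2)) := by rw [mul_comm (Real.exp _), hE]; ring

lemma gaussian_hasDerivAt (s z μ : ℝ) :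
    HasDerivAt (fun μ => gaussianDensity μ s z)
      ((1 / (s * Real.sqrt (2 * Real.pi))) * (Real.exp (-(z - μ) ^ 2 / (2 * s ^ 2)) *
        ((z - μ) / s ^ 2))) μ := by
  have h1 : HasDerivAt (fun μ : ℝ => z - μ) (-1) μ := by
    exact (hasDerivAt_id' μ).const_sub z
  have h2 : HasDerivAt (fun μ : ℝ => -(z - μ) ^ 2 / (2 * s ^ 2))
      ((z - μ) / s ^ 2) μ := by
    have := ((h1.pow 2).neg).div_const (2 * s ^ 2)
    refine this.congr_deriv ?_
    by_cases hs : s = 0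
    · simp [hs]
    · field_simp; ring
  have h3 := (h2.exp).const_mul (1 / (s * Real.sqrt (2 * Real.pi)))
  simpa [gaussianDensity, mul_comm, mul_assoc] using h3

lemma sqrt_2pie_pos : 0 < Real.sqrt (2 * Real.pi * Real.exp 1) :=
  Real.sqrt_pos.2 (by positivity)

lemma exp_neg_half_sqrt : Real.exp (-(1/2 : ℝ)) * Real.sqrt (Real.exp 1) = 1 := by
  rw [show Real.sqrt (Real.exp 1) = Real.exp ((1:ℝ)/2) from (Real.exp_half 1).symm,
    ← Real.exp_add]
  norm_num

lemma gaussian_deriv_bound (s : ℝ) (hs : 0 < s) (z μ : ℝ) :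
    ‖deriv (fun μ => gaussianDensity μ s z) μ‖ ≤
      1 / (s ^ 2 * Real.sqrt (2 * Real.pi * Real.exp 1)) := by
  rw [(gaussian_hasDerivAt s z μ).deriv, Real.norm_eq_abs]
  have hπ : 0 < Real.sqrt (2 * Real.pi) := Real.sqrt_pos.2 (by positivity)
  have key := abs_mul_exp_le s (z - μ) hs
  have hE : 0 ≤ Real.exp (-(z - μ) ^ 2 / (2 * s ^ 2)) := (Real.exp_pos _).le
  have habs : |(1 / (s * Real.sqrt (2 * Real.pi))) * (Real.exp (-(z - μ) ^ 2 / (2 * s ^ 2)) *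
        ((z - μ) / s ^ 2))|
      = (1 / (s * Real.sqrt (2 * Real.pi))) * (Real.exp (-(z - μ) ^ 2 / (2 * s ^ 2)) *
        (|z - μ| / s ^ 2)) := by
    rw [abs_mul, abs_of_pos (show (0:ℝ) < 1 / (s * Real.sqrt (2 * Real.pi)) by positivity),
      abs_mul, abs_of_nonneg hE, abs_div,
      abs_of_pos (show (0:ℝ) < s ^ 2 by positivity)]
  rw [habs]
  have step : (1 / (s * Real.sqrt (2 * Real.pi))) * (Real.exp (-(z - μ) ^ 2 / (2 * s ^ 2)) *
        (|z - μ| / s ^ 2))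
      ≤ (1 / (s * Real.sqrt (2 * Real.pi))) * (s * Real.exp (-(1/2)) / s ^ 2) := by
    apply mul_le_mul_of_nonneg_left _ (by positivity)
    have h1 : Real.exp (-(z - μ) ^ 2 / (2 * s ^ 2)) * (|z - μ| / s ^ 2)
        = (|z - μ| * Real.exp (-(z - μ) ^ 2 / (2 * s ^ 2))) / s ^ 2 := by ring
    rw [h1]
    gcongr
  refine step.trans (le_of_eq ?_)
  rw [Real.sqrt_mul (by positivity : (0:ℝ) ≤ 2 * Real.pi)]
  set A := Real.sqrt (2 * Real.pi) with hA
  set B := Real.sqrt (Real.exp 1) with hB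
  have hB0 : 0 < B := Real.sqrt_pos.2 (Real.exp_pos 1)
  have he : Real.exp (-(1/2 : ℝ)) * B = 1 := exp_neg_half_sqrt
  field_simp
  exact he

lemma gaussian_lip (s : ℝ) (hs : 0 < s) (z μ₁ μ₂ : ℝ) :
    |gaussianDensity μ₁ s z - gaussianDensity μ₂ s z| ≤
      |μ₁ - μ₂| / (s ^ 2 * Real.sqrt (2 * Real.pi * Real.exp 1)) := by
  have h := Convex.norm_image_sub_le_of_norm_deriv_le
    (f := fun μ => gaussianDensity μ s z) (s := Set.univ)
    (C := 1 / (s ^ 2 * Real.sqrt (2 * Real.pi * Real.exp 1)))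
    (fun x _ => (gaussian_hasDerivAt s z x).differentiableAt)
    (fun x _ => gaussian_deriv_bound s hs z x)
    convex_univ (Set.mem_univ μ₂) (Set.mem_univ μ₁)
  rw [Real.norm_eq_abs, Real.norm_eq_abs] at h
  calc |gaussianDensity μ₁ s z - gaussianDensity μ₂ s z|
      ≤ 1 / (s ^ 2 * Real.sqrt (2 * Real.pi * Real.exp 1)) * |μ₁ - μ₂| := h
    _ = |μ₁ - μ₂| / (s ^ 2 * Real.sqrt (2 * Real.pi * Real.exp 1)) := by ring

lemma bracketingNumber_le_of_approx {α β : Type*} (F : Set (α → β → ℝ)) (ε : ℝ) (hε : 0 < ε)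
    {k : ℕ} (g : Fin k → (α → β → ℝ))
    (hcov : ∀ f ∈ F, ∃ j, ∀ x y, |f x y - g j x y| ≤ ε / 2) :
    bracketingNumber F ε ≤ (k : ℝ≥0∞) := by
  refine iInf_le_of_le k (iInf_le_of_le ?_ le_rfl)
  refine ⟨fun j => (fun x y => g j x y - ε/2, fun x y => g j x y + ε/2), ?_, ?_⟩
  · intro j x y
    rw [show (g j x y + ε/2) - (g j x y - ε/2) = ε by ring, abs_of_pos hε]
  · intro f hf
    obtain ⟨j, hj⟩ := hcov f hf
    refine ⟨j, fun x y => ?_⟩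
    have := abs_le.1 (hj x y)
    constructor <;> simp only [] <;> linarith [this.1, this.2]

lemma bracketingNumber_empty_le {α β : Type*} (ε : ℝ) :
    bracketingNumber (∅ : Set (α → β → ℝ)) ε ≤ 0 := by
  refine iInf_le_of_le 0 (iInf_le_of_le ?_ (by norm_num))
  exact ⟨fun j => j.elim0, fun j => j.elim0, fun f hf => hf.elim⟩

lemma one_le_coveringNumber {m n : ℕ} {S : Set (Matrix (Fin m) (Fin n) ℝ)} (hS : S.Nonempty)
    (δ : ℝ) : 1 ≤ coveringNumber S δ := by
  refine le_iInf fun k => le_iInf fun hk => ?_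
  obtain ⟨c, hc⟩ := hk
  obtain ⟨M, hM⟩ := hS
  obtain ⟨j, -⟩ := hc M hM
  have : k ≠ 0 := fun h => (h ▸ j).elim0
  exact_mod_cast Nat.one_le_iff_ne_zero.2 this

lemma coveringNumber_exists {m n : ℕ} {S : Set (Matrix (Fin m) (Fin n) ℝ)} {δ : ℝ}
    (hne : coveringNumber S δ ≠ ⊤) :
    ∃ k : ℕ, (∃ c : Fin k → Matrix (Fin m) (Fin n) ℝ,
      ∀ M ∈ S, ∃ j, frobeniusNorm (M - c j) ≤ δ) ∧ (k : ℝ≥0∞) ≤ coveringNumber S δ := by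
  set P : ℕ → Prop := fun k => ∃ c : Fin k → Matrix (Fin m) (Fin n) ℝ,
      ∀ M ∈ S, ∃ j, frobeniusNorm (M - c j) ≤ δ with hP
  have hSne : {k | P k}.Nonempty := by
    by_contra hcon
    apply hne
    rw [coveringNumber, iInf_eq_top]
    intro k
    rw [iInf_eq_top]
    intro hk
    exact absurd ⟨k, hk⟩ hcon
  refine ⟨sInf {k | P k}, Nat.sInf_mem hSne, ?_⟩
  exact le_iInf fun k => le_iInf fun hk => Nat.cast_le.mpr (Nat.sInf_le hk)

lemma tri_mul_le {a b c A B C : ℝ} (ha : 0 ≤ a) (hA : a ≤ A) (hb : 0 ≤ b) (hB : b ≤ B)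
    (hc : 0 ≤ c) (hC : c ≤ C) : a * (b * c) ≤ A * (B * C) :=
  mul_le_mul hA (mul_le_mul hB hC hc (hb.trans hB)) (mul_nonneg hb hc) (ha.trans hA)

/-- The quadratic mean function of the LQR Gaussian class. -/
noncomputable def lqrMean {dx da : ℕ} (Xs : Set (Fin dx → ℝ)) (As : Set (Fin da → ℝ))
    (M1 : Matrix (Fin dx) (Fin dx) ℝ) (M2 : Matrix (Fin da) (Fin dx) ℝ)
    (M3 : Matrix (Fin da) (Fin da) ℝ) (xa : ↥Xs × ↥As) : ℝ :=
  (xa.1 : Fin dx → ℝ) ⬝ᵥ M1.mulVec (xa.1 : Fin dx → ℝ)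
    + (xa.2 : Fin da → ℝ) ⬝ᵥ M2.mulVec (xa.1 : Fin dx → ℝ)
    + (xa.2 : Fin da → ℝ) ⬝ᵥ M3.mulVec (xa.2 : Fin da → ℝ)

lemma lqr_mean_diff_bound {dx da : ℕ} {Xs : Set (Fin dx → ℝ)} {As : Set (Fin da → ℝ)}
    {mx ma : ℝ} (hXb : ∀ x ∈ Xs, e2norm x ≤ mx) (hAb : ∀ a ∈ As, e2norm a ≤ ma)
    (M1 c1 : Matrix (Fin dx) (Fin dx) ℝ) (M2 c2 : Matrix (Fin da) (Fin dx) ℝ)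
    (M3 c3 : Matrix (Fin da) (Fin da) ℝ) (δ : ℝ) (hδ0 : 0 ≤ δ)
    (h1 : frobeniusNorm (M1 - c1) ≤ δ) (h2 : frobeniusNorm (M2 - c2) ≤ δ)
    (h3 : frobeniusNorm (M3 - c3) ≤ δ) (xa : ↥Xs × ↥As) :
    |lqrMean Xs As M1 M2 M3 xa - lqrMean Xs As c1 c2 c3 xa|
      ≤ (mx ^ 2 + mx * ma + ma ^ 2) * δ := by
  obtain ⟨⟨x, hx⟩, ⟨a, ha⟩⟩ := xa
  have hxm := hXb x hx
  have ham := hAb a ha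
  have hx0 := e2norm_nonneg x
  have ha0 := e2norm_nonneg a
  have e1 : lqrMean Xs As M1 M2 M3 (⟨x, hx⟩, ⟨a, ha⟩)
        - lqrMean Xs As c1 c2 c3 (⟨x, hx⟩, ⟨a, ha⟩)
      = x ⬝ᵥ (M1 - c1).mulVec x + a ⬝ᵥ (M2 - c2).mulVec x + a ⬝ᵥ (M3 - c3).mulVec a := by
    simp only [lqrMean, Matrix.sub_mulVec, dotProduct_sub]
    ring
  rw [e1]
  have b1 := dot_mulVec_abs_le x (M1 - c1) x
  have b2 := dot_mulVec_abs_le a (M2 - c2) x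
  have b3 := dot_mulVec_abs_le a (M3 - c3) a
  have t1 : |x ⬝ᵥ (M1 - c1).mulVec x| ≤ mx * (δ * mx) :=
    b1.trans (tri_mul_le hx0 hxm (frob_nonneg _) h1 hx0 hxm)
  have t2 : |a ⬝ᵥ (M2 - c2).mulVec x| ≤ ma * (δ * mx) :=
    b2.trans (tri_mul_le ha0 ham (frob_nonneg _) h2 hx0 hxm)
  have t3 : |a ⬝ᵥ (M3 - c3).mulVec a| ≤ ma * (δ * ma) :=
    b3.trans (tri_mul_le ha0 ham (frob_nonneg _) h3 ha0 ham)
  calc |x ⬝ᵥ (M1 - c1).mulVec x + a ⬝ᵥ (M2 - c2).mulVec x + a ⬝ᵥ (M3 - c3).mulVec a|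
      ≤ |x ⬝ᵥ (M1 - c1).mulVec x + a ⬝ᵥ (M2 - c2).mulVec x| + |a ⬝ᵥ (M3 - c3).mulVec a| :=
        abs_add_le _ _
    _ ≤ |x ⬝ᵥ (M1 - c1).mulVec x| + |a ⬝ᵥ (M2 - c2).mulVec x| + |a ⬝ᵥ (M3 - c3).mulVec a| := by
        linarith [abs_add_le (x ⬝ᵥ (M1 - c1).mulVec x) (a ⬝ᵥ (M2 - c2).mulVec x)]
    _ ≤ mx * (δ * mx) + ma * (δ * mx) + ma * (δ * ma) := by linarith
    _ = (mx ^ 2 + mx * ma + ma ^ 2) * δ := by ring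

lemma lqr_density_diff (s ε K δ : ℝ) (hs : 0 < s) (hε : 0 < ε) (hK : 0 ≤ K)
    (hδ : δ = ε * s ^ 2 * Real.sqrt (2 * Real.pi * Real.exp 1) / (2 * K))
    (μ1 μ2 z : ℝ) (hμ : |μ1 - μ2| ≤ K * δ) :
    |gaussianDensity μ1 s z - gaussianDensity μ2 s z| ≤ ε / 2 := by
  have hD : 0 < s ^ 2 * Real.sqrt (2 * Real.pi * Real.exp 1) :=
    mul_pos (by positivity) sqrt_2pie_pos
  have hKδ : K * δ ≤ ε * s ^ 2 * Real.sqrt (2 * Real.pi * Real.exp 1) / 2 := by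
    rcases hK.eq_or_lt with h | h
    · rw [hδ, ← h]
      simp only [zero_mul]
      positivity
    · rw [hδ]
      rw [show K * (ε * s ^ 2 * Real.sqrt (2 * Real.pi * Real.exp 1) / (2 * K))
          = ε * s ^ 2 * Real.sqrt (2 * Real.pi * Real.exp 1) / 2 from by
        field_simp]
  calc |gaussianDensity μ1 s z - gaussianDensity μ2 s z|
      ≤ |μ1 - μ2| / (s ^ 2 * Real.sqrt (2 * Real.pi * Real.exp 1)) := gaussian_lip s hs z μ1 μ2
    _ ≤ (K * δ) / (s ^ 2 * Real.sqrt (2 * Real.pi * Real.exp 1)) := by gcongr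
    _ ≤ (ε * s ^ 2 * Real.sqrt (2 * Real.pi * Real.exp 1) / 2)
          / (s ^ 2 * Real.sqrt (2 * Real.pi * Real.exp 1)) := by gcongr
    _ = ε / 2 := by field_simp

/-- **Lemma B.8 (bracketing of the LQR Gaussian-quadratic class via covering).** For the class
`ℱ_h = { f(·|x,a) = 𝒩(·| xᵀM₁x + aᵀM₂x + aᵀM₃a, (H−h+1)σ²) : Mᵢ ∈ ℳᵢ }` over bounded
state/action sets (`‖x‖₂ ≤ m_x`, `‖a‖₂ ≤ m_a`),
`N_[](ε, ℱ_h, ‖·‖_∞) ≤ Π_{i=1,2,3} N(ε σ² (H−h+1) √(2πe) / (2(m_x² + m_x m_a + m_a²)), ℳᵢ, ‖·‖_F)`. -/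
theorem lqr_gaussian_class_bracketing_le_covering
    (dx da H h : ℕ) (hh : h ≤ H) (σ : ℝ) (hσ : 0 < σ)
    (Xs : Set (Fin dx → ℝ)) (As : Set (Fin da → ℝ))
    (mx ma : ℝ)
    (hXb : ∀ x ∈ Xs, e2norm x ≤ mx) (hAb : ∀ a ∈ As, e2norm a ≤ ma)
    (M1s : Set (Matrix (Fin dx) (Fin dx) ℝ))
    (M2s : Set (Matrix (Fin da) (Fin dx) ℝ))
    (M3s : Set (Matrix (Fin da) (Fin da) ℝ))
    (F : Set ((↥Xs × ↥As) → ℝ → ℝ))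
    (hF : F = {f | ∃ M1 ∈ M1s, ∃ M2 ∈ M2s, ∃ M3 ∈ M3s, ∀ (xa : ↥Xs × ↥As) (z : ℝ),
        f xa z = gaussianDensity
          ((xa.1 : Fin dx → ℝ) ⬝ᵥ M1.mulVec (xa.1 : Fin dx → ℝ)
            + (xa.2 : Fin da → ℝ) ⬝ᵥ M2.mulVec (xa.1 : Fin dx → ℝ)
            + (xa.2 : Fin da → ℝ) ⬝ᵥ M3.mulVec (xa.2 : Fin da → ℝ))
          (Real.sqrt ((H - h + 1 : ℕ) : ℝ) * σ) z})
    (ε : ℝ) (hε : 0 < ε) :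
    bracketingNumber F ε ≤
      coveringNumber M1s
          (ε * σ ^ 2 * ((H - h + 1 : ℕ) : ℝ) * Real.sqrt (2 * Real.pi * Real.exp 1)
            / (2 * (mx ^ 2 + mx * ma + ma ^ 2)))
        * coveringNumber M2s
          (ε * σ ^ 2 * ((H - h + 1 : ℕ) : ℝ) * Real.sqrt (2 * Real.pi * Real.exp 1)
            / (2 * (mx ^ 2 + mx * ma + ma ^ 2)))
        * coveringNumber M3s
          (ε * σ ^ 2 * ((H - h + 1 : ℕ) : ℝ) * Real.sqrt (2 * Real.pi * Real.exp 1)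
            / (2 * (mx ^ 2 + mx * ma + ma ^ 2))) := by
  set n : ℝ := ((H - h + 1 : ℕ) : ℝ) with hn
  set K : ℝ := mx ^ 2 + mx * ma + ma ^ 2 with hKdef
  set δ : ℝ := ε * σ ^ 2 * n * Real.sqrt (2 * Real.pi * Real.exp 1) / (2 * K) with hδ
  have hn1 : (1 : ℝ) ≤ n := by
    rw [hn]; exact_mod_cast Nat.le_add_left 1 (H - h)
  -- empty cases
  rcases M1s.eq_empty_or_nonempty with h1e | hM1ne
  · have hFe : F = ∅ := by
      rw [hF]; ext f
      simp only [Set.mem_setOf_eq, Set.mem_empty_iff_false, iff_false]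
      rintro ⟨M1, hM1, -⟩
      rw [h1e] at hM1; exact hM1
    exact le_trans (hFe ▸ bracketingNumber_empty_le ε) zero_le
  rcases M2s.eq_empty_or_nonempty with h2e | hM2ne
  · have hFe : F = ∅ := by
      rw [hF]; ext f
      simp only [Set.mem_setOf_eq, Set.mem_empty_iff_false, iff_false]
      rintro ⟨M1, hM1, M2, hM2, -⟩
      rw [h2e] at hM2; exact hM2
    exact le_trans (hFe ▸ bracketingNumber_empty_le ε) zero_le
  rcases M3s.eq_empty_or_nonempty with h3e | hM3ne
  · have hFe : F = ∅ := by
      rw [hF]; ext f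
      simp only [Set.mem_setOf_eq, Set.mem_empty_iff_false, iff_false]
      rintro ⟨M1, hM1, M2, hM2, M3, hM3, -⟩
      rw [h3e] at hM3; exact hM3
    exact le_trans (hFe ▸ bracketingNumber_empty_le ε) zero_le
  -- nonzero covering numbers
  have hne1 : coveringNumber M1s δ ≠ 0 :=
    (lt_of_lt_of_le zero_lt_one (one_le_coveringNumber hM1ne δ)).ne'
  have hne2 : coveringNumber M2s δ ≠ 0 :=
    (lt_of_lt_of_le zero_lt_one (one_le_coveringNumber hM2ne δ)).ne'
  have hne3 : coveringNumber M3s δ ≠ 0 :=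
    (lt_of_lt_of_le zero_lt_one (one_le_coveringNumber hM3ne δ)).ne'
  -- top cases
  by_cases ht1 : coveringNumber M1s δ = ⊤
  · have : coveringNumber M1s δ * coveringNumber M2s δ * coveringNumber M3s δ = ⊤ := by
      rw [ht1, ENNReal.top_mul hne2, ENNReal.top_mul hne3]
    rw [this]; exact le_top
  by_cases ht2 : coveringNumber M2s δ = ⊤
  · have : coveringNumber M1s δ * coveringNumber M2s δ * coveringNumber M3s δ = ⊤ := by
      rw [ht2, ENNReal.mul_top hne1, ENNReal.top_mul hne3]
    rw [this]; exact le_top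
  by_cases ht3 : coveringNumber M3s δ = ⊤
  · have : coveringNumber M1s δ * coveringNumber M2s δ * coveringNumber M3s δ = ⊤ := by
      rw [ht3, ENNReal.mul_top (mul_ne_zero hne1 hne2)]
    rw [this]; exact le_top
  -- extract finite covers
  obtain ⟨k1, ⟨c1, hc1⟩, hk1⟩ := coveringNumber_exists ht1
  obtain ⟨k2, ⟨c2, hc2⟩, hk2⟩ := coveringNumber_exists ht2
  obtain ⟨k3, ⟨c3, hc3⟩, hk3⟩ := coveringNumber_exists ht3
  -- setup constants
  set s : ℝ := Real.sqrt n * σ with hsdef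
  have hs : 0 < s := mul_pos (Real.sqrt_pos.2 (by linarith)) hσ
  have hs2 : s ^ 2 = n * σ ^ 2 := by
    rw [hsdef, mul_pow, Real.sq_sqrt (by linarith)]
  have hK : 0 ≤ K := by
    rw [hKdef]; nlinarith [sq_nonneg (mx + ma), sq_nonneg mx, sq_nonneg ma]
  have hδeq : δ = ε * s ^ 2 * Real.sqrt (2 * Real.pi * Real.exp 1) / (2 * K) := by
    rw [hδ, hs2]; ring_nf
  have hδ0 : 0 ≤ δ := by
    rw [hδ]
    apply div_nonneg (by positivity)
    nlinarith [sq_nonneg (mx + ma), sq_nonneg mx, sq_nonneg ma]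
  -- the approximating family
  have main : bracketingNumber F ε ≤ ((k1 * k2 * k3 : ℕ) : ℝ≥0∞) := by
    apply bracketingNumber_le_of_approx F ε hε
      (fun j xa z => gaussianDensity
        (lqrMean Xs As (c1 (finProdFinEquiv.symm (finProdFinEquiv.symm j).1).1)
          (c2 (finProdFinEquiv.symm (finProdFinEquiv.symm j).1).2)
          (c3 (finProdFinEquiv.symm j).2) xa) s z)
    intro f hf
    rw [hF] at hf
    obtain ⟨M1, hM1, M2, hM2, M3, hM3, hfeq⟩ := hf
    obtain ⟨j1, hj1⟩ := hc1 M1 hM1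
    obtain ⟨j2, hj2⟩ := hc2 M2 hM2
    obtain ⟨j3, hj3⟩ := hc3 M3 hM3
    refine ⟨finProdFinEquiv (finProdFinEquiv (j1, j2), j3), fun xa z => ?_⟩
    simp only [Equiv.symm_apply_apply]
    rw [hfeq xa z]
    have hμ : |lqrMean Xs As M1 M2 M3 xa - lqrMean Xs As (c1 j1) (c2 j2) (c3 j3) xa|
        ≤ K * δ := by
      rw [hKdef]
      rw [show (mx ^ 2 + mx * ma + ma ^ 2) * δ = K * δ from by rw [hKdef]] at *
      exact le_trans (lqr_mean_diff_bound hXb hAb M1 (c1 j1) M2 (c2 j2) M3 (c3 j3) δ hδ0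
        hj1 hj2 hj3 xa) (by rw [hKdef])
    exact lqr_density_diff s ε K δ hs hε hK hδeq _ _ z hμ
  calc bracketingNumber F ε ≤ ((k1 * k2 * k3 : ℕ) : ℝ≥0∞) := main
    _ = (k1 : ℝ≥0∞) * k2 * k3 := by push_cast; ring
    _ ≤ coveringNumber M1s δ * coveringNumber M2s δ * coveringNumber M3s δ :=
        mul_le_mul' (mul_le_mul' hk1 hk2) hk3
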